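/- arXiv:math/0406044 — 4 statements merged into one kernel-verified Lean document; each statement's English description precedes it below -/
import Mathlib

section
/- Let S be a cancellative semigroup with a global identity, and suppose (a, b) has a least common left multiple. Then xa = yb is a least common left multiple of (a, b) if and only if every common left factor of (x, y) is a unit of S. -/
/-- `l` is a least common left multiple of `(a, b)` in a semigroup. -/
def IsLCLM {S : Type*} [Semigroup S] (l a b : S) : Prop :=
  (∃ p q, l = p * a ∧ l = q * b) ∧
  ∀ m, (∃ p' q', m = p' * a ∧ m = q' * b) → ∃ k, m = k * l

theorem stmt_5 {S : Type*} [Semigroup S]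
    (hl : ∀ a b c : S, a * b = a * c → b = c)
    (hr : ∀ a b c : S, a * c = b * c → a = b)
    (e : S) (he : ∀ a : S, e * a = a ∧ a * e = a)
    (a b : S) (hex : ∃ l, IsLCLM l a b)
    (x y : S) (hxy : x * a = y * b) :
    IsLCLM (x * a) a b ↔
      ∀ f c d : S, x = f * c → y = f * d → ∃ g, f * g = e ∧ g * f = e := by
  constructor
  · rintro ⟨-, hleast⟩ f c d hx hy
    have hcd : c * a = d * b := by
      apply hl f
      calc f * (c * a) = x * a := by rw [hx, mul_assoc]
        _ = y * b := hxy
        _ = f * (d * b) := by rw [hy, mul_assoc]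
    obtain ⟨k, hk⟩ := hleast (c * a) ⟨c, d, rfl, hcd⟩
    -- x * a = f * (c*a) = f * (k * (x*a))
    have h1 : x * a = (f * k) * (x * a) := by
      calc x * a = f * (c * a) := by rw [hx, mul_assoc]
        _ = (f * k) * (x * a) := by rw [hk, ← mul_assoc]
    have hfk : f * k = e := by
      apply hr _ _ (x * a)
      rw [← h1, (he (x * a)).1]
    refine ⟨k, hfk, ?_⟩
    apply hl f
    rw [← mul_assoc, hfk, (he f).1, (he f).2]
  · rintro hunit
    obtain ⟨l, ⟨p, q, hp, hq⟩, hleast⟩ := hex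
    obtain ⟨k, hk⟩ := hleast (x * a) ⟨x, y, rfl, hxy⟩
    have hx : x = k * p := hr _ _ a (by rw [hk, hp, ← mul_assoc])
    have hy : y = k * q := hr _ _ b (by rw [← hxy, hk, hq, ← mul_assoc])
    obtain ⟨g, hkg, hgk⟩ := hunit k p q hx hy
    refine ⟨⟨x, y, rfl, hxy⟩, fun m hm => ?_⟩
    obtain ⟨k', hk'⟩ := hleast m hm
    refine ⟨k' * g, ?_⟩
    rw [hk', hk, ← mul_assoc, mul_assoc k' g k, hgk, (he k').2]
end

section
/- Let A × B → A, written (α,u) ↦ α^u, be a full strongly coconfluent multiplicative action, where B is a right cancellative semigroup. If α^u = β^v and u, v have a least common left multiple l = au = bv, then there is γ ∈ A with α = γ^a and β = γ^b. -/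
theorem stmt_11 {A B : Type*} [Semigroup B]
    (hr : ∀ a b c : B, a * c = b * c → a = b)
    (f : A → B → A) (hmul : ∀ (α : A) (u v : B), f α (u * v) = f (f α u) v)
    (hscc : ∀ (α β : A) (u v : B), f α u = f β v →
      (∃ m p q : B, m = p * u ∧ m = q * v) →
      ∃ (γ : A) (p q : B), α = f γ p ∧ β = f γ q ∧ p * u = q * v)
    (α β : A) (u v : B) (hfab : f α u = f β v)
    (l a b : B) (hla : l = a * u) (hlb : l = b * v)
    (hleast : ∀ m : B, (∃ p q : B, m = p * u ∧ m = q * v) → ∃ k, m = k * l) :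
    ∃ γ : A, α = f γ a ∧ β = f γ b := by
  obtain ⟨γ, p, q, hα, hβ, hpq⟩ := hscc α β u v hfab ⟨l, a, b, hla, hlb⟩
  obtain ⟨k, hk⟩ := hleast (p * u) ⟨p, q, rfl, hpq⟩
  have hp : p = k * a := hr _ _ u (by rw [hk, hla, mul_assoc])
  have hq : q = k * b := hr _ _ v (by rw [← hpq, hk, hlb, mul_assoc])
  exact ⟨f γ k, by rw [hα, hp, hmul], by rw [hβ, hq, hmul]⟩
end

section
/- Let U and A be monoids forming a Zappa–Szép product in which both U and A have common right multiples and the family (α,u) ↦ α·u is a family of surjections (for each α ∈ A and w ∈ U there is u with α·u = w). Then the Zappa–Szép product U ⋈ A has common right multiples. -/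
/-- The Zappa–Szép multiplication on `U × A`: `(u, α)(v, β) = (u(α·v), α^v β)`. -/
def zsMul {U A : Type*} [Mul U] [Mul A] (act : A → U → U) (exp : A → U → A)
    (p q : U × A) : U × A :=
  (p.1 * act p.2 q.1, exp p.2 q.1 * q.2)

theorem stmt_15 {U A : Type*} [Monoid U] [Monoid A]
    (act : A → U → U) (exp : A → U → A)
    (h1 : ∀ (α β : A) (u : U), act (α * β) u = act α (act β u))
    (h2 : ∀ (α β : A) (u : U), exp (α * β) u = exp α (act β u) * exp β u)
    (h3 : ∀ (α : A) (u v : U), act α (u * v) = act α u * act (exp α u) v)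
    (h4 : ∀ (α : A) (u v : U), exp α (u * v) = exp (exp α u) v)
    (h5 : ∀ α : A, exp α 1 = α)
    (h6 : ∀ α : A, act α 1 = 1)
    (h7 : ∀ u : U, act 1 u = u)
    (h8 : ∀ u : U, exp 1 u = 1)
    (hUcrm : ∀ x y : U, ∃ p q : U, x * p = y * q)
    (hAcrm : ∀ x y : A, ∃ p q : A, x * p = y * q)
    (hsurj : ∀ (α : A) (w : U), ∃ u : U, act α u = w) :
    ∀ x y : U × A, ∃ p q : U × A, zsMul act exp x p = zsMul act exp y q := by
  rintro ⟨u, α⟩ ⟨v, β⟩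
  obtain ⟨p, q, hpq⟩ := hUcrm u v
  obtain ⟨p', hp'⟩ := hsurj α p
  obtain ⟨q', hq'⟩ := hsurj β q
  obtain ⟨γ, δ, hγδ⟩ := hAcrm (exp α p') (exp β q')
  exact ⟨⟨p', γ⟩, ⟨q', δ⟩, Prod.ext (by simp [zsMul, hp', hq', hpq]) (by simp [zsMul, hγδ])⟩
end

section
/- Let the rewriting system on words over the disjoint alphabet X ∪ Y be given by rules αu → (α·u)(α^u) for each α ∈ Y, u ∈ X, where α·u ∈ X and α^u ∈ Y*. Then this rewriting system is terminating and strongly confluent, hence complete, and its irreducible words are exactly those of the form uα with u ∈ X* and α ∈ Y*. -/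
/-- The one-step rewriting relation on words over `X ∪ Y` (encoded as `X ⊕ Y`)
replacing a factor `αu` (`α ∈ Y`, `u ∈ X`) by `(α·u)(α^u)`. -/
def Rw {X Y : Type*} (act : Y → X → X) (exp : Y → X → List Y)
    (w w' : List (X ⊕ Y)) : Prop :=
  ∃ (l r : List (X ⊕ Y)) (α : Y) (u : X),
    w = l ++ Sum.inr α :: Sum.inl u :: r ∧
    w' = l ++ Sum.inl (act α u) :: ((exp α u).map Sum.inr ++ r)

/-!
Rewriting preserves the number of letters of `X` in a word and only moves letters of `Y` across
them. Record for each letter of `X` the number of letters of `Y` to its left: a rewrite at `αu`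
lowers the entry of `u` by one and leaves the entries to its left alone, so the records decrease
lexicographically among lists of a fixed length, which gives termination. Two redexes `αu` cannot
overlap (an overlap would make a letter lie in both `X` and `Y`), so two one-step rewrites of a
word either coincide or act on disjoint factors and commute: strong confluence. By Church–Rosser
this gives confluence, hence with termination a unique irreducible word in each class; a word is
irreducible exactly when no letter of `Y` precedes a letter of `X`.
-/

namespace Relation

variable {α : Type*} {r : α → α → Prop}

theorem exists_reflTransGen_normal (hwf : WellFounded (flip r)) (a : α) :
    ∃ b, ReflTransGen r a b ∧ ∀ c, ¬ r b c := by
  obtain ⟨b, hab, hmin⟩ := hwf.has_min {b | ReflTransGen r a b} ⟨a, .refl⟩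
  exact ⟨b, hab, fun c hbc => hmin c (hab.tail hbc) hbc⟩

theorem ReflTransGen.eq_of_normal {a b : α} (h : ReflTransGen r a b) (ha : ∀ c, ¬ r a c) :
    a = b := by
  rcases h.cases_head with rfl | ⟨c, hac, -⟩
  · rfl
  · exact absurd hac (ha c)

theorem existsUnique_eqvGen_normal (hwf : WellFounded (flip r))
    (hconf : ∀ a b c, r a b → r a c → ∃ d, ReflGen r b d ∧ ReflTransGen r c d) (a : α) :
    ∃! b, EqvGen r a b ∧ ∀ c, ¬ r b c := by
  obtain ⟨b, hab, hb⟩ := exists_reflTransGen_normal hwf a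
  have hab : EqvGen r a b := EqvGen.reflTransGen_le_eqvGen r a b hab
  refine ⟨b, ⟨hab, hb⟩, fun b' ⟨hab', hb'⟩ => ?_⟩
  have hbb' : EqvGen r b b' := .trans _ _ _ (.symm _ _ hab) hab'
  obtain ⟨d, hbd, hb'd⟩ := (equivalence_join_reflTransGen hconf).eqvGen_iff.mp
    (hbb'.mono fun _ _ h => ⟨_, .single h, .refl⟩)
  rw [hb'd.eq_of_normal hb', ← hbd.eq_of_normal hb]

end Relation

open Sum

section Rewriting

variable {X Y : Type*}

def yCounts : List (X ⊕ Y) → List ℕ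
  | [] => []
  | inl _ :: w => 0 :: yCounts w
  | inr _ :: w => (yCounts w).map (· + 1)

theorem yCounts_append (l w : List (X ⊕ Y)) :
    yCounts (l ++ w) = yCounts l ++ (yCounts w).map (· + l.countP isRight) := by
  induction l with
  | nil => simp [yCounts]
  | cons x l ih =>
    cases x <;> simp [yCounts, ih, Function.comp_def, List.countP_cons, add_assoc]

theorem yCounts_map_inr (e : List Y) : yCounts (e.map inr : List (X ⊕ Y)) = [] := by
  induction e <;> simp_all [yCounts]

variable {act : Y → X → X} {exp : Y → X → List Y}

theorem Rw.shortlex_yCounts {w w' : List (X ⊕ Y)} (h : Rw act exp w w') :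
    List.Shortlex (· < ·) (yCounts w') (yCounts w) := by
  obtain ⟨l, r, α, u, rfl, rfl⟩ := h
  simp only [yCounts, yCounts_append, yCounts_map_inr, List.map_cons]
  refine .of_lex ?_ ((List.Lex.rel ?_).append_left _ _)
  · simp
  · omega

theorem wellFounded_flip_rw : WellFounded (flip (Rw act exp)) :=
  Subrelation.wf Rw.shortlex_yCounts (InvImage.wf yCounts (List.Shortlex.wf wellFounded_lt))

theorem Rw.cons {w w' : List (X ⊕ Y)} (h : Rw act exp w w') (x : X ⊕ Y) :
    Rw act exp (x :: w) (x :: w') := by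
  obtain ⟨l, r, α, u, rfl, rfl⟩ := h
  exact ⟨x :: l, r, α, u, rfl, rfl⟩

theorem Rw.join_disjoint_redexes (l m r : List (X ⊕ Y)) (α β : Y) (u v : X) : ∃ w',
    Rw act exp (l ++ inl (act α u) :: ((exp α u).map inr ++ (m ++ inr β :: inl v :: r))) w' ∧
    Rw act exp (l ++ inr α :: inl u :: (m ++ inl (act β v) :: ((exp β v).map inr ++ r))) w' :=
  ⟨l ++ inl (act α u) :: ((exp α u).map inr ++ (m ++ inl (act β v) :: ((exp β v).map inr ++ r))),
    ⟨l ++ inl (act α u) :: ((exp α u).map inr ++ m), r, β, v, by simp, by simp⟩,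
    ⟨l, m ++ inl (act β v) :: ((exp β v).map inr ++ r), α, u, rfl, rfl⟩⟩

theorem redexes_eq_or_disjoint {l₁ r₁ l₂ r₂ : List (X ⊕ Y)} {α β : Y} {u v : X}
    (h : l₁ ++ inr α :: inl u :: r₁ = l₂ ++ inr β :: inl v :: r₂) :
    (l₁ = l₂ ∧ α = β ∧ u = v ∧ r₁ = r₂) ∨
      (∃ m, l₂ = l₁ ++ inr α :: inl u :: m) ∨ (∃ m, l₁ = l₂ ++ inr β :: inl v :: m) := by
  induction l₁ generalizing l₂ with
  | nil =>
    rcases l₂ with _ | ⟨x, _ | ⟨y, m⟩⟩ <;> simp_all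
  | cons x l₁ ih =>
    rcases l₂ with _ | ⟨y, l₂⟩
    · rcases l₁ with _ | ⟨y, _ | ⟨z, m⟩⟩ <;> simp_all
    · simp only [List.cons_append, List.cons.injEq] at h
      obtain ⟨rfl, h⟩ := h
      simpa using ih h

theorem Rw.strongly_confluent {w w₁ w₂ : List (X ⊕ Y)} (h₁ : Rw act exp w w₁)
    (h₂ : Rw act exp w w₂) :
    ∃ w', Relation.ReflGen (Rw act exp) w₁ w' ∧ Relation.ReflGen (Rw act exp) w₂ w' := by
  obtain ⟨l₁, r₁, α, u, rfl, rfl⟩ := h₁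
  obtain ⟨l₂, r₂, β, v, h, rfl⟩ := h₂
  rcases redexes_eq_or_disjoint h with ⟨rfl, rfl, rfl, rfl⟩ | ⟨m, rfl⟩ | ⟨m, rfl⟩
  · exact ⟨_, .refl, .refl⟩
  · obtain rfl : r₁ = m ++ inr β :: inl v :: r₂ := by simpa using h
    obtain ⟨w', h₁, h₂⟩ := Rw.join_disjoint_redexes l₁ m r₂ α β u v
    exact ⟨w', .single h₁, .single (by simpa using h₂)⟩
  · obtain rfl : r₂ = m ++ inr α :: inl u :: r₁ := by simpa using h.symm
    obtain ⟨w', h₁, h₂⟩ := Rw.join_disjoint_redexes l₂ m r₁ β α v u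
    exact ⟨w', .single (by simpa using h₂), .single h₁⟩

theorem not_rw_map_inl_append_map_inr (xs : List X) (ys : List Y) (w : List (X ⊕ Y)) :
    ¬ Rw act exp (xs.map inl ++ ys.map inr) w := by
  rintro ⟨l, r, α, u, h, -⟩
  induction xs generalizing l with
  | nil =>
    have : inl u ∈ ys.map (inr : Y → X ⊕ Y) := by simp_all
    simp at this
  | cons x xs ih =>
    rcases l with _ | ⟨y, l⟩
    · simp at h
    · simp only [List.map_cons, List.cons_append, List.cons.injEq] at h
      exact ih l h.2

theorem forall_not_rw_iff (w : List (X ⊕ Y)) : (∀ w', ¬ Rw act exp w w') ↔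
    ∃ (xs : List X) (ys : List Y), w = xs.map inl ++ ys.map inr := by
  refine ⟨fun h => ?_, fun ⟨xs, ys, hw⟩ => hw ▸ not_rw_map_inl_append_map_inr xs ys⟩
  induction w with
  | nil => exact ⟨[], [], rfl⟩
  | cons x w ih =>
    obtain ⟨xs, ys, rfl⟩ := ih fun w' hw => h _ (hw.cons x)
    rcases x with u | β
    · exact ⟨u :: xs, ys, rfl⟩
    · rcases xs with _ | ⟨u, xs⟩
      · exact ⟨[], β :: ys, rfl⟩
      · exact (h _ ⟨[], _, β, u, rfl, rfl⟩).elim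

end Rewriting

theorem stmt_18 {X Y : Type*} (act : Y → X → X) (exp : Y → X → List Y) :
    -- terminating
    (∀ f : ℕ → List (X ⊕ Y),
      ¬ (∀ n, Rw act exp (f n) (f (n + 1)) ∧ f n ≠ f (n + 1))) ∧
    -- strongly confluent
    (∀ w w1 w2, Rw act exp w w1 → Rw act exp w w2 →
      ∃ w', Relation.ReflGen (Rw act exp) w1 w' ∧
        Relation.ReflGen (Rw act exp) w2 w') ∧
    -- irreducible words are exactly those of the form `uα`, `u ∈ X*`, `α ∈ Y*`
    (∀ w : List (X ⊕ Y), (∀ w', ¬ Rw act exp w w') ↔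
      ∃ (xs : List X) (ys : List Y),
        w = xs.map Sum.inl ++ ys.map Sum.inr) ∧
    -- completeness: each equivalence class contains a unique irreducible word
    (∀ w : List (X ⊕ Y), ∃! w',
      Relation.EqvGen (Rw act exp) w w' ∧ ∀ w'', ¬ Rw act exp w' w'') := by
  have hwf : WellFounded (flip (Rw act exp)) := wellFounded_flip_rw
  refine ⟨fun f hf => ?_, fun _ _ _ => Rw.strongly_confluent, forall_not_rw_iff,
    Relation.existsUnique_eqvGen_normal hwf fun _ _ _ h₁ h₂ => ?_⟩
  · exact (wellFounded_iff_isEmpty_descending_chain.mp hwf).false ⟨f, fun n => (hf n).1⟩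
  · obtain ⟨w', h₁, h₂⟩ := Rw.strongly_confluent h₁ h₂
    exact ⟨w', h₁, h₂.to_reflTransGen⟩
end
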